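/- arXiv:1302.5549 — 3 statements merged into one kernel-verified Lean document; each statement's English description precedes it below -/
import Mathlib

section
/- Let G1 = (V1, E1) and G2 = (V2, E2) be well-formed graphs over the same node type such that the sets V2 \ V1, V1 \ V2, E2 \ E1 and E1 \ E2 are finite. Applying the operations of the delta Δ(G1, G2) to G1 in the order: first all remEdge operations, then all remNode operations, then all addNode operations, then all addEdge operations, yields exactly the graph G2. -/
/-- A graph over a node type `α`: a set of nodes and a set of edges
(unordered pairs of nodes). -/
structure DeltaGraph (α : Type*) where
  V : Set α
  E : Set (Sym2 α)

/-- A graph is well-formed if its edges are pairs of *distinct* nodes and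
both endpoints of every edge belong to the node set. -/
def DeltaGraph.WellFormed {α : Type*} (G : DeltaGraph α) : Prop :=
  (∀ e ∈ G.E, ¬ e.IsDiag) ∧ ∀ e ∈ G.E, ∀ v ∈ e, v ∈ G.V

/-- Update operations on graphs. -/
inductive Op (α : Type*) where
  | addNode (v : α)
  | remNode (v : α)
  | addEdge (e : Sym2 α)
  | remEdge (e : Sym2 α)

/-- The delta Δ(G1, G2). -/
def delta {α : Type*} (G1 G2 : DeltaGraph α) : Set (Op α) :=
  (Op.addNode '' (G2.V \ G1.V)) ∪ (Op.remNode '' (G1.V \ G2.V)) ∪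
  (Op.addEdge '' (G2.E \ G1.E)) ∪
  (Op.remEdge '' {e | e ∈ G1.E \ G2.E ∧ ∀ v ∈ e, v ∈ G2.V})

/-- The result of applying a set `S` of operations to a graph `G` in the order:
first all `remEdge` operations, then all `remNode` operations
(each of which removes the node and its incident edges),
then all `addNode` operations, then all `addEdge` operations. -/
def applyDelta {α : Type*} (S : Set (Op α)) (G : DeltaGraph α) : DeltaGraph α :=
  ⟨(G.V \ {v | Op.remNode v ∈ S}) ∪ {v | Op.addNode v ∈ S},
   {e ∈ G.E | Op.remEdge e ∉ S ∧ ∀ v ∈ e, Op.remNode v ∉ S} ∪ {e | Op.addEdge e ∈ S}⟩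

theorem DeltaGraph.ext {α : Type*} {G H : DeltaGraph α} (hV : G.V = H.V) (hE : G.E = H.E) :
    G = H := by
  cases G; cases H; congr

section

variable {α : Type*} {G1 G2 : DeltaGraph α}

@[simp]
theorem addNode_mem_delta {v : α} : Op.addNode v ∈ delta G1 G2 ↔ v ∈ G2.V ∧ v ∉ G1.V := by
  simp [delta]

@[simp]
theorem remNode_mem_delta {v : α} : Op.remNode v ∈ delta G1 G2 ↔ v ∈ G1.V ∧ v ∉ G2.V := by
  simp [delta]

@[simp]
theorem addEdge_mem_delta {e : Sym2 α} : Op.addEdge e ∈ delta G1 G2 ↔ e ∈ G2.E ∧ e ∉ G1.E := by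
  simp [delta]

@[simp]
theorem remEdge_mem_delta {e : Sym2 α} :
    Op.remEdge e ∈ delta G1 G2 ↔ (e ∈ G1.E ∧ e ∉ G2.E) ∧ ∀ v ∈ e, v ∈ G2.V := by
  simp [delta]

theorem applyDelta_delta_V : (applyDelta (delta G1 G2) G1).V = G2.V := by
  ext v
  simp only [applyDelta, Set.mem_union, Set.mem_sdiff, Set.mem_ofPred_eq, addNode_mem_delta,
    remNode_mem_delta]
  tauto

theorem applyDelta_delta_E (h1 : ∀ e ∈ G1.E, ∀ v ∈ e, v ∈ G1.V)
    (h2 : ∀ e ∈ G2.E, ∀ v ∈ e, v ∈ G2.V) : (applyDelta (delta G1 G2) G1).E = G2.E := by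
  ext e
  simp only [applyDelta, Set.mem_union, Set.mem_ofPred_eq, addEdge_mem_delta,
    remEdge_mem_delta, remNode_mem_delta]
  constructor
  · rintro (⟨he1, hnotRem, hkept⟩ | ⟨he2, -⟩)
    · by_contra he2
      -- an edge of `G1` whose endpoints all survive into `G2` is removed by its `remEdge`
      refine hnotRem ⟨⟨he1, he2⟩, fun v hv => ?_⟩
      by_contra hv2
      exact hkept v hv ⟨h1 e he1 v hv, hv2⟩
    · exact he2
  · intro he2
    by_cases he1 : e ∈ G1.E
    · exact Or.inl ⟨he1, fun h => h.1.2 he2, fun v hv h => h.2 (h2 e he2 v hv)⟩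
    · exact Or.inr ⟨he2, he1⟩

end

theorem delta_apply_general {α : Type*} (G1 G2 : DeltaGraph α)
    (h1 : G1.WellFormed) (h2 : G2.WellFormed) :
    applyDelta (delta G1 G2) G1 = G2 :=
  DeltaGraph.ext applyDelta_delta_V (applyDelta_delta_E h1.2 h2.2)

/-- Applying the operations of Δ(G1, G2) to G1, in the order
remEdge / remNode / addNode / addEdge, yields exactly G2. -/
theorem delta_apply {α : Type*} (G1 G2 : DeltaGraph α)
    (h1 : G1.WellFormed) (h2 : G2.WellFormed)
    (hfV₁ : (G2.V \ G1.V).Finite) (hfV₂ : (G1.V \ G2.V).Finite)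
    (hfE₁ : (G2.E \ G1.E).Finite) (hfE₂ : (G1.E \ G2.E).Finite) :
    applyDelta (delta G1 G2) G1 = G2 :=
  delta_apply_general G1 G2 h1 h2
end

section
/- If G is a well-formed graph and op is an operation that is valid at G, then applying the inverse operation inv(op) to the graph obtained by applying op to G yields back the graph G. -/
/-- A graph over a node type `α`: a set of nodes and a set of edges
(unordered pairs of nodes). -/
structure OpGraph (α : Type*) where
  V : Set α
  E : Set (Sym2 α)

/-- A graph is well-formed if its edges are pairs of *distinct* nodes and
both endpoints of every edge belong to the node set. -/
def OpGraph.WellFormed {α : Type*} (G : OpGraph α) : Prop :=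
  (∀ e ∈ G.E, ¬ e.IsDiag) ∧ ∀ e ∈ G.E, ∀ v ∈ e, v ∈ G.V

/-- The action of a single operation on a graph: `addNode v` adds the node `v`;
`remNode v` removes `v` and all edges incident to it; `addEdge e` adds the edge `e`;
`remEdge e` removes the edge `e`. -/
def applyOp {α : Type*} (G : OpGraph α) : Op α → OpGraph α
  | Op.addNode v => ⟨G.V ∪ {v}, G.E⟩
  | Op.remNode v => ⟨G.V \ {v}, {e ∈ G.E | v ∉ e}⟩
  | Op.addEdge e => ⟨G.V, G.E ∪ {e}⟩
  | Op.remEdge e => ⟨G.V, G.E \ {e}⟩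

/-- Applying a sequence of operations to a graph, from left to right. -/
def applySeq {α : Type*} (G : OpGraph α) (l : List (Op α)) : OpGraph α :=
  l.foldl applyOp G

/-- Validity of an operation at a graph. -/
def validAt {α : Type*} (G : OpGraph α) : Op α → Prop
  | Op.addNode v => v ∉ G.V
  | Op.remNode v => v ∈ G.V ∧ ∀ e ∈ G.E, v ∉ e
  | Op.addEdge e => ¬ e.IsDiag ∧ (∀ v ∈ e, v ∈ G.V) ∧ e ∉ G.E
  | Op.remEdge e => e ∈ G.E

/-- The inverse of an operation. -/
def Op.inv {α : Type*} : Op α → Op α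
  | Op.addNode v => Op.remNode v
  | Op.remNode v => Op.addNode v
  | Op.addEdge e => Op.remEdge e
  | Op.remEdge e => Op.addEdge e

/-- Validity of a sequence of operations at a graph: each operation is valid at the
graph obtained by applying the preceding operations. -/
def validSeq {α : Type*} : OpGraph α → List (Op α) → Prop
  | _, [] => True
  | G, op :: rest => validAt G op ∧ validSeq (applyOp G op) rest

attribute [ext] OpGraph

section Inverse

variable {α : Type*} (G : OpGraph α)

theorem applyOp_addNode_remNode {v : α} (hv : v ∉ G.V)
    (hinc : ∀ e ∈ G.E, ∀ w ∈ e, w ∈ G.V) :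
    applyOp (applyOp G (.addNode v)) (.remNode v) = G := by
  ext1
  · exact Disjoint.sup_sdiff_cancel_right (Set.disjoint_singleton_right.2 hv)
  · exact Set.sep_eq_self_iff_mem_true.2 fun e he hve => hv (hinc e he v hve)

theorem applyOp_remNode_addNode {v : α} (hv : v ∈ G.V) (hE : ∀ e ∈ G.E, v ∉ e) :
    applyOp (applyOp G (.remNode v)) (.addNode v) = G := by
  ext1
  · exact Set.sdiff_union_of_subset (Set.singleton_subset_iff.2 hv)
  · exact Set.sep_eq_self_iff_mem_true.2 hE

theorem applyOp_addEdge_remEdge {e : Sym2 α} (he : e ∉ G.E) :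
    applyOp (applyOp G (.addEdge e)) (.remEdge e) = G := by
  ext1
  · rfl
  · exact Disjoint.sup_sdiff_cancel_right (Set.disjoint_singleton_right.2 he)

theorem applyOp_remEdge_addEdge {e : Sym2 α} (he : e ∈ G.E) :
    applyOp (applyOp G (.remEdge e)) (.addEdge e) = G := by
  ext1
  · rfl
  · exact Set.sdiff_union_of_subset (Set.singleton_subset_iff.2 he)

end Inverse

/-- Applying the inverse of a valid operation undoes the operation. -/
theorem applyOp_inv {α : Type*} (G : OpGraph α) (op : Op α)
    (hwf : G.WellFormed) (hval : validAt G op) :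
    applyOp (applyOp G op) op.inv = G := by
  cases op with
  | addNode v => exact applyOp_addNode_remNode G hval hwf.2
  | remNode v => exact applyOp_remNode_addNode G hval.1 hval.2
  | addEdge e => exact applyOp_addEdge_remEdge G hval.2.2
  | remEdge e => exact applyOp_remEdge_addEdge G hval
end

section
/- Let a timestamped log over a time interval [t0, t_cur] starting from a well-formed graph SG_{t0} be given, and fix t ∈ [t0, t_cur]. Then from the single maintained snapshot SG_t and the log, every snapshot SG_{t'} with t' ∈ [t0, t_cur] can be reconstructed: (forward reconstruction) if t ≤ t', applying to SG_t the subsequence of logged operations with timestamps in (t, t'] yields SG_{t'}; (backward reconstruction) if t' < t, applying to SG_t the inverses of the logged operations with timestamps in (t', t], taken in reverse order, yields SG_{t'}. -/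
/-- The snapshot at time `t` determined by an initial graph `SG0` and a timestamped
log `L`: the result of applying to `SG0` the logged operations with timestamp `≤ t`. -/
def snapshot {α τ : Type*} [LinearOrder τ] (SG0 : OpGraph α) (L : List (Op α × τ))
    (t : τ) : OpGraph α :=
  applySeq SG0 ((L.filter fun p => decide (p.2 ≤ t)).map Prod.fst)

/-!
Because the log is sorted by timestamp, the operations with timestamp `≤ t'` are those with
timestamp `≤ t` followed by those in `(t, t']`; this is forward reconstruction. Backward
reconstruction undoes the operations in `(t', t]`: a valid operation applied to a well-formed graph
is undone by its inverse, hence a valid sequence by the reversed sequence of inverses, and validity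
and well-formedness of the intermediate snapshots are inherited from the validity of the whole log.
-/

section Graph

variable {α : Type*}

theorem applySeq_append (G : OpGraph α) (l₁ l₂ : List (Op α)) :
    applySeq G (l₁ ++ l₂) = applySeq (applySeq G l₁) l₂ :=
  List.foldl_append

theorem validSeq_append (G : OpGraph α) (l₁ l₂ : List (Op α)) :
    validSeq G (l₁ ++ l₂) ↔ validSeq G l₁ ∧ validSeq (applySeq G l₁) l₂ := by
  induction l₁ generalizing G with
  | nil => simp [validSeq, applySeq]
  | cons op l₁ ih => simp [validSeq, applySeq, ih, and_assoc]

theorem OpGraph.WellFormed.applyOp {G : OpGraph α} {op : Op α} (hG : G.WellFormed)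
    (hop : validAt G op) : (applyOp G op).WellFormed := by
  obtain ⟨hdiag, hends⟩ := hG
  cases op with
  | addNode v => exact ⟨hdiag, fun e he w hw => Or.inl (hends e he w hw)⟩
  | remNode v =>
    refine ⟨fun e he => hdiag e he.1, fun e he w hw => ⟨hends e he.1 w hw, ?_⟩⟩
    rintro rfl
    exact he.2 hw
  | addEdge e =>
    refine ⟨?_, ?_⟩ <;> rintro f (hf | rfl)
    exacts [hdiag f hf, hop.1, hends f hf, hop.2.1]
  | remEdge e => exact ⟨fun f hf => hdiag f hf.1, fun f hf => hends f hf.1⟩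

theorem OpGraph.WellFormed.applySeq {G : OpGraph α} {l : List (Op α)} (hG : G.WellFormed)
    (hl : validSeq G l) : (applySeq G l).WellFormed := by
  induction l generalizing G with
  | nil => exact hG
  | cons op l ih => exact ih (hG.applyOp hl.1) hl.2

/-- Well-formedness is what makes `addNode v` invertible: a node outside the graph carries no
edge, so `remNode v` deletes no edge. -/
theorem applyOp_applyOp_inv {G : OpGraph α} {op : Op α} (hG : G.WellFormed)
    (hop : validAt G op) : applyOp (applyOp G op) op.inv = G := by
  obtain ⟨V, E⟩ := G
  cases op with
  | addNode v =>
    have hv : v ∉ V := hop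
    simp only [applyOp, Op.inv, OpGraph.mk.injEq]
    constructor
    · simpa using hv
    · ext e
      simpa using fun he hve => hv (hG.2 e he v hve)
  | remNode v =>
    simp only [applyOp, Op.inv, OpGraph.mk.injEq]
    constructor
    · simpa using hop.1
    · ext e
      simpa using hop.2 e
  | addEdge e => simpa [applyOp, Op.inv] using hop.2.2
  | remEdge e =>
    have he : e ∈ E := hop
    simpa [applyOp, Op.inv] using he

theorem applySeq_applySeq_reverse_inv {G : OpGraph α} {l : List (Op α)} (hG : G.WellFormed)
    (hl : validSeq G l) : applySeq (applySeq G l) (l.reverse.map Op.inv) = G := by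
  induction l generalizing G with
  | nil => rfl
  | cons op l ih =>
    rw [List.reverse_cons, List.map_append, applySeq_append]
    exact (congrArg (applyOp · op.inv) (ih (hG.applyOp hl.1) hl.2)).trans
      (applyOp_applyOp_inv hG hl.1)

end Graph

section Log

variable {β τ : Type*} [LinearOrder τ]

theorem List.filter_le_append_filter_lt (f : β → τ) {L : List β}
    (hL : L.Pairwise fun p q => f p ≤ f q) (t : τ) :
    L.filter (fun p => decide (f p ≤ t)) ++ L.filter (fun p => decide (t < f p)) = L := by
  induction L with
  | nil => rfl
  | cons a L ih =>
    rw [List.pairwise_cons] at hL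
    by_cases ha : f a ≤ t
    · simp [ha, ih hL.2]
    · have hlate : ∀ b ∈ L, t < f b := fun b hb => (not_le.1 ha).trans_le (hL.1 b hb)
      have hnone : L.filter (fun p => decide (f p ≤ t)) = [] :=
        List.filter_eq_nil_iff.2 fun b hb => by simpa using hlate b hb
      simpa [ha, hnone] using ⟨not_le.1 ha, hlate⟩

theorem List.filter_le_eq_append_filter_Ioc (f : β → τ) {L : List β}
    (hL : L.Pairwise fun p q => f p ≤ f q) {t t' : τ} (htt' : t ≤ t') :
    L.filter (fun p => decide (f p ≤ t')) =
      L.filter (fun p => decide (f p ≤ t)) ++ L.filter (fun p => decide (t < f p ∧ f p ≤ t')) := by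
  conv_lhs => rw [← List.filter_le_append_filter_lt f hL t]
  rw [List.filter_append, List.filter_filter, List.filter_filter]
  congr 1 <;> refine List.filter_congr fun p _ => ?_
  · simpa using fun h => h.trans htt'
  · simp [and_comm]

end Log

section Snapshot

variable {α τ : Type*} [LinearOrder τ] {SG0 : OpGraph α} {L : List (Op α × τ)}

def logBetween (L : List (Op α × τ)) (t t' : τ) : List (Op α) :=
  (L.filter fun p => decide (t < p.2 ∧ p.2 ≤ t')).map Prod.fst

theorem snapshot_eq_applySeq_logBetween (hL : L.Pairwise fun p q => p.2 ≤ q.2) {t t' : τ}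
    (htt' : t ≤ t') : snapshot SG0 L t' = applySeq (snapshot SG0 L t) (logBetween L t t') := by
  rw [snapshot, List.filter_le_eq_append_filter_Ioc Prod.snd hL htt', List.map_append,
    applySeq_append, logBetween, snapshot]

theorem validSeq_filter_le (hL : L.Pairwise fun p q => p.2 ≤ q.2)
    (hval : validSeq SG0 (L.map Prod.fst)) (t : τ) :
    validSeq SG0 ((L.filter fun p => decide (p.2 ≤ t)).map Prod.fst) := by
  rw [← List.filter_le_append_filter_lt Prod.snd hL t, List.map_append, validSeq_append] at hval
  exact hval.1

theorem validSeq_snapshot_logBetween (hL : L.Pairwise fun p q => p.2 ≤ q.2)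
    (hval : validSeq SG0 (L.map Prod.fst)) {t t' : τ} (htt' : t ≤ t') :
    validSeq (snapshot SG0 L t) (logBetween L t t') := by
  have h := validSeq_filter_le hL hval t'
  rw [List.filter_le_eq_append_filter_Ioc Prod.snd hL htt', List.map_append,
    validSeq_append] at h
  exact h.2

theorem OpGraph.WellFormed.snapshot (hwf : SG0.WellFormed)
    (hL : L.Pairwise fun p q => p.2 ≤ q.2) (hval : validSeq SG0 (L.map Prod.fst)) (t : τ) :
    (_root_.snapshot SG0 L t).WellFormed :=
  hwf.applySeq (validSeq_filter_le hL hval t)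

end Snapshot

theorem snapshot_reconstruction_general {α τ : Type*} [LinearOrder τ]
    (SG0 : OpGraph α) (L : List (Op α × τ))
    (hwf : SG0.WellFormed)
    (hmono : L.Pairwise fun p q => p.2 ≤ q.2)
    (hval : validSeq SG0 (L.map Prod.fst))
    (t : τ)
    (t' : τ) :
    (t ≤ t' →
      applySeq (snapshot SG0 L t)
        ((L.filter fun p => decide (t < p.2 ∧ p.2 ≤ t')).map Prod.fst) =
      snapshot SG0 L t') ∧
    (t' < t →
      applySeq (snapshot SG0 L t)
        ((((L.filter fun p => decide (t' < p.2 ∧ p.2 ≤ t)).map Prod.fst).reverse).map Op.inv) =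
      snapshot SG0 L t') := by
  refine ⟨fun htt' => (snapshot_eq_applySeq_logBetween hmono htt').symm, fun ht't => ?_⟩
  rw [snapshot_eq_applySeq_logBetween hmono ht't.le]
  exact applySeq_applySeq_reverse_inv (hwf.snapshot hmono hval t')
    (validSeq_snapshot_logBetween hmono hval ht't.le)

/-- From the single maintained snapshot `SG_t` and the log, every snapshot `SG_{t'}`
can be reconstructed: forward reconstruction (applying the logged operations with
timestamps in `(t, t']`) when `t ≤ t'`, and backward reconstruction (applying the
inverses of the logged operations with timestamps in `(t', t]`, in reverse order)
when `t' < t`. -/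
theorem snapshot_reconstruction {α τ : Type*} [LinearOrder τ]
    (t0 tcur : τ) (SG0 : OpGraph α) (L : List (Op α × τ))
    (hwf : SG0.WellFormed)
    (hts : ∀ p ∈ L, t0 ≤ p.2 ∧ p.2 ≤ tcur)
    (hmono : L.Pairwise fun p q => p.2 ≤ q.2)
    (hval : validSeq SG0 (L.map Prod.fst))
    (t : τ) (ht : t0 ≤ t ∧ t ≤ tcur)
    (t' : τ) (ht' : t0 ≤ t' ∧ t' ≤ tcur) :
    (t ≤ t' →
      applySeq (snapshot SG0 L t)
        ((L.filter fun p => decide (t < p.2 ∧ p.2 ≤ t')).map Prod.fst) =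
      snapshot SG0 L t') ∧
    (t' < t →
      applySeq (snapshot SG0 L t)
        ((((L.filter fun p => decide (t' < p.2 ∧ p.2 ≤ t)).map Prod.fst).reverse).map Op.inv) =
      snapshot SG0 L t') :=
  snapshot_reconstruction_general SG0 L hwf hmono hval t t'
end
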